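/- Let A be a Q(q)-algebra, x, y ∈ A satisfying the a_{ij} = −2 quantum Serre relation ∑_{r+s=3} (−1)^r x^{(r)} y x^{(s)} = 0, where x^{(k)} = x^k/[k]_{q}!. Then for every m ≥ 3 and e ∈ {±1}: ∑_{r+s=m} (−1)^r q^{e r (3−m)} x^{(r)} y x^{(s)} = 0. -/

import Mathlib

noncomputable section

abbrev K : Type := RatFunc ℚ

/-- The indeterminate `q` in `ℚ(q)`. -/
def qq : K := RatFunc.X

/-- Balanced quantum integer at base `x`. -/
def qintx (x : K) (m : ℤ) : K := (x ^ m - x ^ (-m)) / (x - x⁻¹)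

/-- Balanced quantum integer `[m]_q`. -/
def qint (m : ℤ) : K := qintx qq m

/-- Quantum factorial at base `x`. -/
def qfactx (x : K) (m : ℕ) : K := ∏ j ∈ Finset.range m, qintx x ((j : ℤ) + 1)

/-- Quantum factorial `[m]_q!`. -/
def qfact (m : ℕ) : K := qfactx qq m

/-- Gaussian binomial coefficient at base `x` (zero when `r > m`). -/
def qbinomx (x : K) (m r : ℕ) : K :=
  if r ≤ m then qfactx x m / (qfactx x r * qfactx x (m - r)) else 0

/-- Gaussian binomial coefficient. -/
def qbinom (m r : ℕ) : K := qbinomx qq m r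

/-- The ı-divided powers `B^{(m)}_{p̄}` of `B` with central parameter `Z`,
given by the closed product formulas of the paper. -/
def iDP {A : Type*} [Ring A] [Algebra K A] (B Z : A) (p : ZMod 2) (m : ℕ) : A :=
  (qfact m)⁻¹ •
    ((if m % 2 = 1 then B else 1) *
      ((List.range (m / 2)).map (fun j =>
        B ^ 2 -
          ((qint (if p = 1 then 2 * (j : ℤ) + 1
                  else if m % 2 = 1 then 2 * (j : ℤ) + 2 else 2 * (j : ℤ))) ^ 2 * qq) • Z)).prod)

/-- The usual divided power `x^{(k)} = x^k/[k]_q!`. -/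
def dp {A : Type*} [Ring A] [Algebra K A] (x : A) (k : ℕ) : A := (qfact k)⁻¹ • x ^ k

/-! Write `f_m` for the sum with `q`-exponents `e r (c - m)` (here `c = 3`). Multiplying `f_m` by
`x` on either side and using `x^{(r)} x = x x^{(r)} = [r+1] x^{(r+1)}`, the identity
`[m+1] t^{r(c-m-1)} = t^{r(c-m)} [m+1-r] + t^{c-1-2m} t^{(r-1)(c-m)} [r]` (valid for `t = q^{±1}`)
yields Lusztig's recursion `[m+1] f_{m+1} = f_m x - q^{e(c-1-2m)} x f_m`. At `m = c` the `q`-powers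
disappear and `f_c` is the ordinary Serre element, so `f_c = 0` propagates to every `m ≥ c`
because `[m+1] ≠ 0`. -/

open Finset

lemma qq_ne_zero : qq ≠ 0 := RatFunc.X_ne_zero

lemma qq_pow_ne_one {n : ℕ} (hn : n ≠ 0) : qq ^ n ≠ 1 := by
  intro h
  have hX : (Polynomial.X : Polynomial ℚ) ^ n = 1 :=
    RatFunc.algebraMap_injective ℚ (by simpa [qq, RatFunc.algebraMap_X] using h)
  simpa [hn] using congrArg Polynomial.natDegree hX

lemma qq_zpow_ne_zpow_neg {n : ℕ} (hn : n ≠ 0) : qq ^ (n : ℤ) ≠ qq ^ (-(n : ℤ)) := by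
  intro h
  apply qq_pow_ne_one (n := 2 * n) (by omega)
  calc qq ^ (2 * n) = qq ^ (n : ℤ) * qq ^ (n : ℤ) := by rw [two_mul, pow_add, zpow_natCast]
    _ = 1 := by
      nth_rw 2 [h]
      rw [← zpow_add₀ qq_ne_zero, add_neg_cancel, zpow_zero]

lemma qint_succ_ne_zero (k : ℕ) : qint ((k : ℤ) + 1) ≠ 0 := by
  have hden : qq - qq⁻¹ ≠ 0 := by
    simpa [sub_ne_zero] using qq_zpow_ne_zpow_neg one_ne_zero
  refine div_ne_zero (sub_ne_zero.2 ?_) hden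
  exact_mod_cast qq_zpow_ne_zpow_neg k.succ_ne_zero

lemma qint_zero : qint 0 = 0 := by simp [qint, qintx]

lemma qfact_succ (m : ℕ) : qfact (m + 1) = qfact m * qint ((m : ℤ) + 1) :=
  prod_range_succ _ m

lemma qintx_inv (t : K) (k : ℤ) : qintx t⁻¹ k = qintx t k := by
  rw [qintx, qintx, inv_zpow', inv_zpow', neg_neg, inv_inv, ← neg_sub t, ← neg_sub (t ^ k),
    neg_div_neg_eq]

lemma qintx_qq_zpow {e : ℤ} (he : e = 1 ∨ e = -1) (k : ℤ) : qintx (qq ^ e) k = qint k := by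
  rcases he with rfl | rfl
  · rw [zpow_one, qint]
  · rw [zpow_neg_one, qintx_inv, qint]

lemma qintx_succ_mul_zpow {t : K} (ht : t ≠ 0) (c m s : ℤ) :
    qintx t (m + 1) * t ^ ((s + 1) * (c - (m + 1))) =
      t ^ ((s + 1) * (c - m)) * qintx t (m - s) +
        t ^ (c - 1 - 2 * m) * t ^ (s * (c - m)) * qintx t (s + 1) := by
  simp only [qintx, div_mul_eq_mul_div, mul_div_assoc', ← add_div, sub_mul, mul_sub,
    ← zpow_add₀ ht]
  ring_nf

section DividedPowers

variable {A : Type*} [Ring A] [Algebra K A] (x y : A)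

lemma dp_mul_self (r : ℕ) : dp x r * x = qint ((r : ℤ) + 1) • dp x (r + 1) := by
  rw [dp, dp, smul_mul_assoc, ← pow_succ, smul_smul, qfact_succ, mul_inv, mul_left_comm,
    mul_inv_cancel₀ (qint_succ_ne_zero r), mul_one]

lemma self_mul_dp (r : ℕ) : x * dp x r = qint ((r : ℤ) + 1) • dp x (r + 1) := by
  rw [← dp_mul_self, dp, mul_smul_comm, smul_mul_assoc, (Commute.self_pow x r).eq]

lemma sum_smul_dp_mul_self (a : ℕ → K) (m : ℕ) :
    (∑ r ∈ range (m + 1), a r • (dp x r * y * dp x (m - r))) * x =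
      ∑ r ∈ range (m + 2), (a r * qint ((m : ℤ) + 1 - r)) • (dp x r * y * dp x (m + 1 - r)) := by
  rw [sum_range_succ _ (m + 1), Nat.cast_succ, sub_self, qint_zero, mul_zero, zero_smul,
    add_zero, sum_mul]
  refine sum_congr rfl fun r hr => ?_
  have hrm : r ≤ m := Nat.lt_succ_iff.mp (mem_range.mp hr)
  rw [smul_mul_assoc, mul_assoc, dp_mul_self, mul_smul_comm, smul_smul, Nat.cast_sub hrm,
    Nat.sub_add_comm hrm]
  ring_nf

lemma self_mul_sum_smul_dp (a : ℕ → K) (m : ℕ) :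
    x * (∑ r ∈ range (m + 1), a r • (dp x r * y * dp x (m - r))) =
      ∑ r ∈ range (m + 2), (a (r - 1) * qint r) • (dp x r * y * dp x (m + 1 - r)) := by
  rw [sum_range_succ' _ (m + 1), Nat.cast_zero, qint_zero, mul_zero, zero_smul, add_zero, mul_sum]
  refine sum_congr rfl fun r _ => ?_
  rw [mul_smul_comm, ← mul_assoc, ← mul_assoc, self_mul_dp, smul_mul_assoc, smul_mul_assoc,
    smul_smul, Nat.add_sub_cancel, Nat.add_sub_add_right, Nat.cast_succ, mul_comm]

/-- `higherSerre x (dp y n) (1 - n * a) e m` is Lusztig's `f_{i,j;n,m,e}`. -/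
def higherSerre (c e : ℤ) (m : ℕ) : A :=
  ∑ r ∈ range (m + 1), ((-1 : K) ^ r * qq ^ (e * r * (c - m))) • (dp x r * y * dp x (m - r))

variable {x y} {e : ℤ}

lemma qint_smul_higherSerre_succ (he : e = 1 ∨ e = -1) (c : ℤ) (m : ℕ) :
    qint ((m : ℤ) + 1) • higherSerre x y c e (m + 1) =
      higherSerre x y c e m * x - qq ^ (e * (c - 1 - 2 * m)) • (x * higherSerre x y c e m) := by
  rw [higherSerre, higherSerre, sum_smul_dp_mul_self, self_mul_sum_smul_dp, smul_sum, smul_sum,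
    ← sum_sub_distrib]
  refine sum_congr rfl fun r _ => ?_
  rw [smul_smul, smul_smul, ← sub_smul]
  congr 1
  rcases r with _ | s
  · simp [qint_zero]
  have hzpow (k : ℤ) : qq ^ (e * k) = (qq ^ e) ^ k := zpow_mul qq e k
  simp only [Nat.add_sub_cancel, mul_assoc e, hzpow, ← qintx_qq_zpow he, pow_succ]
  push_cast
  have key := qintx_succ_mul_zpow (zpow_ne_zero e qq_ne_zero) c m s
  rw [show (m : ℤ) + 1 - (s + 1) = m - s by ring]
  linear_combination (-(-1 : K) ^ s) * key

lemma higherSerre_eq_zero_of_le (he : e = 1 ∨ e = -1) {c : ℤ} {m₀ m : ℕ}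
    (h₀ : higherSerre x y c e m₀ = 0) (hm : m₀ ≤ m) : higherSerre x y c e m = 0 := by
  induction m, hm using Nat.le_induction with
  | base => exact h₀
  | succ n _ ih =>
    have hrec := qint_smul_higherSerre_succ (x := x) (y := y) he c n
    rw [ih, zero_mul, mul_zero, smul_zero, sub_zero] at hrec
    rw [← inv_smul_smul₀ (qint_succ_ne_zero n) (higherSerre x y c e (n + 1)), hrec, smul_zero]

end DividedPowers

theorem stmt11 {A : Type*} [Ring A] [Algebra K A] (x y : A)
    (h : ∑ r ∈ Finset.range 4, ((-1 : K) ^ r) • (dp x r * y * dp x (3 - r)) = 0)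
    (m : ℕ) (hm : 3 ≤ m) (e : ℤ) (he : e = 1 ∨ e = -1) :
    ∑ r ∈ Finset.range (m + 1),
      ((-1 : K) ^ r * qq ^ (e * (r : ℤ) * (3 - (m : ℤ)))) • (dp x r * y * dp x (m - r)) = 0 := by
  have base : higherSerre x y 3 e 3 = 0 := by simpa [higherSerre] using h
  exact higherSerre_eq_zero_of_le he base hm
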